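/- arXiv:1408.6182 — 2 statements merged into one kernel-verified Lean document; each statement's English description precedes it below -/
import Mathlib

section
/- Let ρ be a nonempty finite string and z any finite string over a linearly ordered alphabet. Then z <lex ρ ++ z if and only if z ≺ ρ^∞. -/
/-- The first `m` characters of the infinite periodic sequence `ρ^∞`
    (for nonempty `ρ`). -/
def infTake {α : Type*} (ρ : List α) (m : ℕ) : List α :=
  ((List.replicate m ρ).flatten).take m

section aux
variable {α : Type*} [LinearOrder α]

private lemma lex_cons_iff' {a b : α} {x y : List α} :
    List.Lex (· < ·) (a :: x) (b :: y) ↔ a < b ∨ (a = b ∧ List.Lex (· < ·) x y) := by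
  constructor
  · intro h
    cases h with
    | rel h => exact Or.inl h
    | cons h => exact Or.inr ⟨rfl, h⟩
  · rintro (h | ⟨rfl, h⟩)
    · exact List.Lex.rel h
    · exact List.Lex.cons h

private lemma lex_take_iff : ∀ (z l : List α), z.length < l.length →
    (List.Lex (· < ·) z l ↔
      List.Lex (· < ·) z (l.take z.length) ∨ z = l.take z.length)
  | [], l, h => by
    cases l with
    | nil => simp at h
    | cons b l' =>
      simp only [List.length_nil, List.take_zero]
      exact ⟨fun _ => Or.inr trivial, fun _ => List.Lex.nil⟩
  | a :: z', l, h => by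
    cases l with
    | nil => simp at h
    | cons b l' =>
      simp only [List.length_cons, List.take_succ_cons]
      rw [lex_cons_iff', lex_cons_iff',
        lex_take_iff z' l' (by simpa using Nat.lt_of_succ_lt_succ h)]
      simp only [List.cons.injEq]
      tauto

private lemma lex_append_append : ∀ (s r a b : List α), s.length = r.length →
    (List.Lex (· < ·) (s ++ a) (r ++ b) ↔
      List.Lex (· < ·) s r ∨ (s = r ∧ List.Lex (· < ·) a b))
  | [], [], a, b, _ => by
    simp only [List.nil_append]
    constructor
    · exact fun h => Or.inr ⟨trivial, h⟩
    · rintro (h | ⟨_, h⟩)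
      · cases h
      · exact h
  | [], r :: rs, a, b, h => by simp at h
  | s :: ss, [], a, b, h => by simp at h
  | c :: ss, d :: rs, a, b, h => by
    simp only [List.cons_append]
    rw [lex_cons_iff', lex_cons_iff',
      lex_append_append ss rs a b (by simpa using h)]
    simp only [List.cons.injEq]
    tauto

private lemma eq_append_append {s r a b : List α} (h : s.length = r.length) :
    s ++ a = r ++ b ↔ s = r ∧ a = b := by
  constructor
  · intro he
    exact List.append_inj he h
  · rintro ⟨rfl, rfl⟩; rfl

private lemma take_flatten_replicate {ρ : List α} (hρ : ρ ≠ []) {k n : ℕ} (hkn : k ≤ n) :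
    ((List.replicate n ρ).flatten).take k = infTake ρ k := by
  have : List.replicate n ρ = List.replicate k ρ ++ List.replicate (n - k) ρ := by
    rw [← List.replicate_add]
    congr 1
    omega
  rw [this, List.flatten_append, List.take_append_of_le_length, infTake]
  have hρ1 : 1 ≤ ρ.length := List.length_pos_iff.mpr hρ
  simp only [List.length_flatten, List.map_replicate, List.sum_replicate, smul_eq_mul]
  calc k = k * 1 := (mul_one k).symm
    _ ≤ k * ρ.length := Nat.mul_le_mul_left k hρ1

private lemma infTake_of_le {ρ : List α} {m : ℕ} (hm : m ≤ ρ.length) :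
    infTake ρ m = ρ.take m := by
  cases m with
  | zero => simp [infTake]
  | succ m' =>
    rw [infTake, List.replicate_succ, List.flatten_cons,
      List.take_append_of_le_length hm]

private lemma infTake_of_ge {ρ : List α} (hρ : ρ ≠ []) {m : ℕ} (hm : ρ.length ≤ m) :
    infTake ρ m = ρ ++ infTake ρ (m - ρ.length) := by
  have hρ1 : 1 ≤ ρ.length := List.length_pos_iff.mpr hρ
  have hm1 : 1 ≤ m := le_trans hρ1 hm
  obtain ⟨m', rfl⟩ : ∃ m', m = m' + 1 := ⟨m - 1, by omega⟩
  rw [infTake, List.replicate_succ, List.flatten_cons,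
    List.take_append, List.take_of_length_le hm,
    take_flatten_replicate hρ (by omega)]

private lemma main_aux {ρ : List α} (hρ : ρ ≠ []) :
    ∀ (n : ℕ) (z : List α), z.length ≤ n →
    (List.Lex (· < ·) z (ρ ++ z) ↔
      (List.Lex (· < ·) z (infTake ρ z.length) ∨ z = infTake ρ z.length)) := by
  intro n
  induction n with
  | zero =>
    intro z hz
    have hz0 : z = [] := List.eq_nil_of_length_eq_zero (Nat.le_zero.mp hz)
    subst hz0
    simp only [List.length_nil, List.append_nil]
    constructor
    · intro _; right; simp [infTake]
    · intro _
      cases ρ with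
      | nil => exact absurd rfl hρ
      | cons a l => exact List.Lex.nil
  | succ n ih =>
    intro z hz
    rcases le_or_gt z.length ρ.length with hle | hlt
    · -- short case
      have h1 : z.length < (ρ ++ z).length := by
        simp only [List.length_append]
        have := List.length_pos_iff.mpr hρ
        omega
      rw [lex_take_iff z (ρ ++ z) h1, List.take_append_of_le_length hle,
        infTake_of_le hle]
    · -- long case
      obtain ⟨t1, t2, hzdec, h1⟩ :
          ∃ t1 t2 : List α, z = t1 ++ t2 ∧ t1.length = ρ.length :=
        ⟨z.take ρ.length, z.drop ρ.length, (List.take_append_drop _ _).symm,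
          by rw [List.length_take]; omega⟩
      have h2 : t2.length = z.length - ρ.length := by
        have := congrArg List.length hzdec
        simp only [List.length_append] at this
        omega
      have hIH : List.Lex (· < ·) t2 (ρ ++ t2) ↔
          (List.Lex (· < ·) t2 (infTake ρ t2.length) ∨ t2 = infTake ρ t2.length) := by
        apply ih
        have := List.length_pos_iff.mpr hρ
        omega
      have hRHS : infTake ρ z.length = ρ ++ infTake ρ t2.length := by
        rw [infTake_of_ge hρ (le_of_lt hlt), h2]
      rw [hRHS]
      subst hzdec
      rw [lex_append_append t1 ρ t2 (t1 ++ t2) h1,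
        lex_append_append t1 ρ t2 (infTake ρ t2.length) h1,
        eq_append_append h1]
      constructor
      · rintro (h | ⟨rfl, h⟩)
        · exact Or.inl (Or.inl h)
        · rcases hIH.mp h with h' | h'
          · exact Or.inl (Or.inr ⟨rfl, h'⟩)
          · exact Or.inr ⟨rfl, h'⟩
      · rintro ((h | ⟨rfl, h⟩) | ⟨rfl, h⟩)
        · exact Or.inl h
        · exact Or.inr ⟨rfl, hIH.mpr (Or.inl h)⟩
        · exact Or.inr ⟨rfl, hIH.mpr (Or.inr h)⟩

end aux

/-- For nonempty `ρ` and any `z`: `z <lex ρ ++ z` iff `z ≺ ρ^∞`. -/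
theorem lex_append_iff_prec_inf {α : Type*} [LinearOrder α] (ρ z : List α)
    (hρ : ρ ≠ []) :
    List.Lex (· < ·) z (ρ ++ z) ↔
      (List.Lex (· < ·) z (infTake ρ z.length) ∨ z = infTake ρ z.length) := by
  exact main_aux hρ z.length z le_rfl
end

section
/- Let ρ be a nonempty finite string, z a finite string, and i a natural number. Then lcp(ρ^i ++ z, ρ^∞) = i·|ρ| + lcp(z, ρ^∞), and ρ^i ++ z ≺ ρ^∞ if and only if z ≺ ρ^∞. -/
/-- The length of the longest common prefix of two lists. -/
def lcp {α : Type*} [DecidableEq α] : List α → List α → ℕ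
  | a :: x, b :: y => if a = b then lcp x y + 1 else 0
  | _, _ => 0

/-- The `i`-fold concatenation `ρ^i`. -/
def lpow {α : Type*} (ρ : List α) (i : ℕ) : List α :=
  (List.replicate i ρ).flatten

/-!
Reading the first `|ρ^i| + m` characters of `ρ^∞` gives `ρ^i` followed by the first `m`
characters of `ρ^∞`. Both the longest common prefix and the lexicographic order are
insensitive to a common prefix, so comparing `ρ^i ++ z` with `ρ^∞` reduces to comparing `z`
with `ρ^∞`.
-/

lemma lcp_append_left {α : Type*} [DecidableEq α] (p x y : List α) :
    lcp (p ++ x) (p ++ y) = p.length + lcp x y := by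
  induction p with
  | nil => simp
  | cons a p ih => simp only [List.cons_append, lcp, ↓reduceIte, ih, List.length_cons]; omega

lemma List.Lex.append_left_iff {α : Type*} {r : α → α → Prop} [Std.Irrefl r]
    (p x y : List α) : List.Lex r (p ++ x) (p ++ y) ↔ List.Lex r x y := by
  induction p with
  | nil => rfl
  | cons a p ih => rw [List.cons_append, List.cons_append, List.lex_cons_iff, ih]

section Periodic

variable {α : Type*} (ρ : List α)

lemma lpow_succ (i : ℕ) : lpow ρ (i + 1) = ρ ++ lpow ρ i := by
  simp [lpow, List.replicate_succ]

lemma length_lpow (i : ℕ) : (lpow ρ i).length = i * ρ.length := by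
  simp [lpow]

lemma infTake_eq_take_lpow {m k : ℕ} (h : m ≤ k) : infTake ρ m = (lpow ρ k).take m := by
  rcases eq_or_ne ρ [] with rfl | hρ
  · simp [infTake, lpow]
  obtain ⟨j, rfl⟩ := Nat.exists_eq_add_of_le h
  have hm : m ≤ (lpow ρ m).length := by
    rw [length_lpow]
    exact Nat.le_mul_of_pos_right m (List.length_pos_iff.mpr hρ)
  rw [lpow, List.replicate_add, List.flatten_append]
  exact (List.take_append_of_le_length hm).symm

lemma infTake_length_add (m : ℕ) : infTake ρ (ρ.length + m) = ρ ++ infTake ρ m := by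
  rw [infTake_eq_take_lpow ρ (Nat.le_succ _), lpow_succ, List.take_length_add_append,
    ← infTake_eq_take_lpow ρ (Nat.le_add_left m _)]

lemma infTake_length_lpow_add (i m : ℕ) :
    infTake ρ ((lpow ρ i).length + m) = lpow ρ i ++ infTake ρ m := by
  induction i with
  | zero => simp [lpow]
  | succ i ih =>
    rw [lpow_succ, List.length_append, Nat.add_assoc, infTake_length_add, ih,
      List.append_assoc]

end Periodic

theorem lcp_pow_append_infTake_general {α : Type*} [LinearOrder α] (ρ z : List α)
    (i : ℕ) :
    lcp (lpow ρ i ++ z) (infTake ρ (lpow ρ i ++ z).length)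
        = i * ρ.length + lcp z (infTake ρ z.length) ∧
    ((List.Lex (· < ·) (lpow ρ i ++ z) (infTake ρ (lpow ρ i ++ z).length) ∨
        lpow ρ i ++ z = infTake ρ (lpow ρ i ++ z).length) ↔
      (List.Lex (· < ·) z (infTake ρ z.length) ∨ z = infTake ρ z.length)) := by
  rw [List.length_append, infTake_length_lpow_add, lcp_append_left, length_lpow,
    List.Lex.append_left_iff, List.append_cancel_left_eq]
  exact ⟨rfl, Iff.rfl⟩

/-- For nonempty `ρ`: `lcp(ρ^i ++ z, ρ^∞) = i·|ρ| + lcp(z, ρ^∞)`, and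
    `ρ^i ++ z ≺ ρ^∞ ↔ z ≺ ρ^∞`. -/
theorem lcp_pow_append_infTake {α : Type*} [LinearOrder α] (ρ z : List α)
    (hρ : ρ ≠ []) (i : ℕ) :
    lcp (lpow ρ i ++ z) (infTake ρ (lpow ρ i ++ z).length)
        = i * ρ.length + lcp z (infTake ρ z.length) ∧
    ((List.Lex (· < ·) (lpow ρ i ++ z) (infTake ρ (lpow ρ i ++ z).length) ∨
        lpow ρ i ++ z = infTake ρ (lpow ρ i ++ z).length) ↔
      (List.Lex (· < ·) z (infTake ρ z.length) ∨ z = infTake ρ z.length)) :=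
  lcp_pow_append_infTake_general ρ z i
end
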